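/- arXiv:math/0702675 — 2 statements merged into one kernel-verified Lean document; each statement's English description precedes it below -/
import Mathlib

section
/- If Q* ⊆ Q** are finite bounded quasisemilattices with the bqsl inclusion being a bqsl embedding, then there is a chain Q* = Q₀ ⊆ Q₁ ⊆ ... ⊆ Qₘ = Q** such that each Qᵢ is a bqsl, |Q_{i+1}| = |Qᵢ| + 1, and each inclusion Qᵢ ⊆ Q_{i+1} is a bqsl embedding. -/
/-- The maximal lower bounds of `p` and `q` computed within a subset `A`. -/
def MLBin {α : Type*} [PartialOrder α] (A : Set α) (p q : α) : Set α :=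
  {r | r ∈ A ∧ r ≤ p ∧ r ≤ q ∧ ∀ s ∈ A, s ≤ p → s ≤ q → r ≤ s → r = s}

/-- A quasisemilattice: every pair of elements has finitely many maximal lower
bounds, and every common lower bound lies below one of them. -/
def IsQSL (α : Type*) [PartialOrder α] : Prop :=
  ∀ p q : α, (MLBin Set.univ p q).Finite ∧
    ∀ r : α, r ≤ p → r ≤ q → ∃ s ∈ MLBin Set.univ p q, r ≤ s

/-- `A` is a sub-bqsl of the ambient bqsl: it contains the minimum, and for each
pair of its elements the maximal lower bounds computed inside `A` coincide (in
number and identity) with those computed in the ambient structure, i.e. the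
inclusion is a bqsl embedding. -/
def IsSubBqsl {α : Type*} [PartialOrder α] [OrderBot α] (A : Set α) : Prop :=
  ⊥ ∈ A ∧ ∀ p ∈ A, ∀ q ∈ A, MLBin A p q = MLBin Set.univ p q

/-!
Adjoin the elements of `B \ A` one at a time, always a minimal remaining one `x`. For `p, q` in
`A ∪ {x}`, every ambient maximal lower bound `r` of `p, q` lies in `B`; if `p` or `q` is `x`,
then `r ≤ x` forces `r ∈ A ∪ {x}` by minimality, and otherwise `r ∈ A` since `A` is a sub-bqsl.
In a quasisemilattice, a set containing all ambient maximal lower bounds of `p, q` has exactly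
those as its own maximal lower bounds of `p, q`, so `A ∪ {x}` is again a sub-bqsl.
-/

section Bqsl

variable {α : Type*} [PartialOrder α]

lemma mlbin_eq_univ_of_subset (hqsl : IsQSL α) {S : Set α} {p q : α}
    (h : MLBin Set.univ p q ⊆ S) : MLBin S p q = MLBin Set.univ p q := by
  ext r
  constructor
  · rintro ⟨hrS, hrp, hrq, hmax⟩
    obtain ⟨s, hs, hrs⟩ := (hqsl p q).2 r hrp hrq
    rwa [hmax s (h hs) hs.2.1 hs.2.2.1 hrs]
  · rintro ⟨-, hrp, hrq, hmax⟩
    exact ⟨h ⟨trivial, hrp, hrq, hmax⟩, hrp, hrq, fun s _ => hmax s trivial⟩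

variable [OrderBot α]

lemma IsSubBqsl.mlbin_eq_of_subset {S T : Set α} (hS : IsSubBqsl S) (hT : IsSubBqsl T)
    (hST : S ⊆ T) {p q : α} (hp : p ∈ S) (hq : q ∈ S) : MLBin S p q = MLBin T p q := by
  rw [hS.2 p hp q hq, hT.2 p (hST hp) q (hST hq)]

lemma IsSubBqsl.insert_of_minimal (hqsl : IsQSL α) {A B : Set α} (hA : IsSubBqsl A)
    (hB : IsSubBqsl B) (hAB : A ⊆ B) {x : α} (hx : Minimal (· ∈ B \ A) x) :
    IsSubBqsl (insert x A) := by
  have hxAB : insert x A ⊆ B := Set.insert_subset hx.1.1 hAB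
  have below_x : ∀ r ∈ B, r ≤ x → r ∈ insert x A := fun r hrB hrx =>
    hrx.eq_or_lt.imp id fun hlt => by_contra fun hrA => hx.not_prop_of_lt hlt ⟨hrB, hrA⟩
  refine ⟨Or.inr hA.1, fun p hp q hq => mlbin_eq_univ_of_subset hqsl fun r hr => ?_⟩
  have hrB : r ∈ B := by
    rw [← hB.2 p (hxAB hp) q (hxAB hq)] at hr
    exact hr.1
  rcases hp with rfl | hpA
  · exact below_x r hrB hr.2.1
  rcases hq with rfl | hqA
  · exact below_x r hrB hr.2.2.1
  rw [← hA.2 p hpA q hqA] at hr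
  exact Or.inr hr.1

lemma IsSubBqsl.exists_insert_of_ssubset [DecidableEq α] (hqsl : IsQSL α) {A B : Finset α}
    (hA : IsSubBqsl (A : Set α)) (hB : IsSubBqsl (B : Set α)) (hAB : A ⊂ B) :
    ∃ x ∈ B \ A, IsSubBqsl ((insert x A : Finset α) : Set α) := by
  obtain ⟨x, hx⟩ := Finset.exists_minimal (Finset.sdiff_nonempty.mpr hAB.not_subset)
  refine ⟨x, hx.1, ?_⟩
  rw [Finset.coe_insert]
  exact hA.insert_of_minimal hqsl hB (Finset.coe_subset.mpr hAB.subset) (by simpa using hx)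

end Bqsl

theorem Finset.exists_chain_card_succ {α : Type*} [DecidableEq α] {P : Finset α → Prop}
    {B : Finset α} (step : ∀ A ⊂ B, P A → ∃ x ∈ B \ A, P (insert x A))
    {A : Finset α} (hAB : A ⊆ B) (hA : P A) :
    ∃ (m : ℕ) (c : ℕ → Finset α), c 0 = A ∧ c m = B ∧ (∀ i ≤ m, P (c i)) ∧
      ∀ i < m, c i ⊆ c (i + 1) ∧ (c (i + 1)).card = (c i).card + 1 := by
  induction hn : (B \ A).card generalizing A with
  | zero =>
    have hBA : B ⊆ A := Finset.sdiff_eq_empty_iff_subset.mp (Finset.card_eq_zero.mp hn)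
    exact ⟨0, fun _ => A, rfl, hAB.antisymm hBA, fun _ _ => hA, fun i h => absurd h i.not_lt_zero⟩
  | succ n ih =>
    have hAB' : A ⊂ B := by
      refine Finset.ssubset_iff_subset_ne.mpr ⟨hAB, ?_⟩
      rintro rfl
      simp at hn
    obtain ⟨x, hx, hPx⟩ := step A hAB' hA
    obtain ⟨hxB, hxA⟩ := Finset.mem_sdiff.mp hx
    have hcard : (B \ insert x A).card = n := by
      rw [Finset.sdiff_insert, Finset.card_erase_of_mem hx, hn, Nat.add_sub_cancel]
    obtain ⟨m, c, hc0, hcm, hPc, hc⟩ := ih (Finset.insert_subset hxB hAB) hPx hcard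
    refine ⟨m + 1, fun | 0 => A | i + 1 => c i, rfl, hcm, ?_, ?_⟩
    · rintro (_ | i) hi
      exacts [hA, hPc i (Nat.le_of_succ_le_succ hi)]
    · rintro (_ | i) hi
      · simp only [hc0]
        exact ⟨Finset.subset_insert x A, Finset.card_insert_of_notMem hxA⟩
      · exact hc i (Nat.lt_of_succ_lt_succ hi)

theorem stmt_2_general {α : Type*} [PartialOrder α] [OrderBot α]
    (hqsl : IsQSL α) (A B : Finset α) (hAB : A ⊆ B)
    (hA : IsSubBqsl (A : Set α)) (hB : IsSubBqsl (B : Set α)) :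
    ∃ (m : ℕ) (c : ℕ → Finset α),
      c 0 = A ∧ c m = B ∧
      (∀ i ≤ m, IsSubBqsl ((c i : Set α))) ∧
      ∀ i < m,
        c i ⊆ c (i + 1) ∧
        (c (i + 1)).card = (c i).card + 1 ∧
        -- the inclusion `c i ⊆ c (i+1)` is a bqsl embedding
        ∀ p ∈ c i, ∀ q ∈ c i,
          MLBin ((c i : Set α)) p q = MLBin ((c (i + 1) : Set α)) p q := by
  classical
  obtain ⟨m, c, hc0, hcm, hPc, hc⟩ := Finset.exists_chain_card_succ
    (fun S hSB (hS : IsSubBqsl (S : Set α)) => hS.exists_insert_of_ssubset hqsl hB hSB) hAB hA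
  refine ⟨m, c, hc0, hcm, hPc, fun i hi => ⟨(hc i hi).1, (hc i hi).2, fun p hp q hq => ?_⟩⟩
  exact (hPc i hi.le).mlbin_eq_of_subset (hPc (i + 1) hi) (Finset.coe_subset.mpr (hc i hi).1) hp hq

/-- If `Q* ⊆ Q**` are finite sub-bqsls (with the inclusions being bqsl
embeddings), then there is a chain `Q* = Q₀ ⊆ Q₁ ⊆ ⋯ ⊆ Qₘ = Q**` of sub-bqsls
with `|Q_{i+1}| = |Q_i| + 1` in which each inclusion is a bqsl embedding. -/
theorem stmt_2 {α : Type*} [PartialOrder α] [OrderBot α] [Fintype α]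
    [DecidableEq α] (hqsl : IsQSL α) (A B : Finset α) (hAB : A ⊆ B)
    (hA : IsSubBqsl (A : Set α)) (hB : IsSubBqsl (B : Set α)) :
    ∃ (m : ℕ) (c : ℕ → Finset α),
      c 0 = A ∧ c m = B ∧
      (∀ i ≤ m, IsSubBqsl ((c i : Set α))) ∧
      ∀ i < m,
        c i ⊆ c (i + 1) ∧
        (c (i + 1)).card = (c i).card + 1 ∧
        -- the inclusion `c i ⊆ c (i+1)` is a bqsl embedding
        ∀ p ∈ c i, ∀ q ∈ c i,
          MLBin ((c i : Set α)) p q = MLBin ((c (i + 1) : Set α)) p q :=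
  stmt_2_general hqsl A B hAB hA hB
end

section
/- Adjoining a minimal element of the complement preserves the bqsl structure: if Q** is a finite bqsl, Q* ⊆ Q** is a sub-bqsl (the inclusion is a bqsl embedding), and q is a minimal element of Q** − Q*, then Q* ∪ {q} with the induced order is a bqsl and its inclusion into Q** is a bqsl embedding. -/
/-- If `Q**` is a finite bqsl, `Q* ⊆ Q**` is a sub-bqsl, and `q` is a minimal
element of `Q** − Q*`, then `Q* ∪ {q}` is again a sub-bqsl of `Q**`. -/
theorem stmt_3 {α : Type*} [PartialOrder α] [OrderBot α] [Fintype α]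
    (hqsl : IsQSL α) (A : Set α) (hA : IsSubBqsl A)
    (q : α) (hq : q ∉ A) (hmin : ∀ r : α, r ∉ A → r ≤ q → r = q) :
    IsSubBqsl (insert q A) := by
  obtain ⟨hbot, hA2⟩ := hA
  refine ⟨Set.mem_insert_of_mem _ hbot, ?_⟩
  intro p hp p' hp'
  have memB : ∀ r : α, r ≤ p → r ≤ p' →
      (∀ s, s ≤ p → s ≤ p' → r ≤ s → r = s) → r ∈ insert q A := by
    intro r hrp hrp' hmax
    rcases hp with rfl | hp
    · rcases Classical.em (r ∈ A) with h | h
      · exact Set.mem_insert_of_mem _ h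
      · exact (hmin r h hrp).symm ▸ Set.mem_insert _ _
    rcases hp' with rfl | hp'
    · rcases Classical.em (r ∈ A) with h | h
      · exact Set.mem_insert_of_mem _ h
      · exact (hmin r h hrp').symm ▸ Set.mem_insert _ _
    · have : r ∈ MLBin A p p' := by
        rw [hA2 p hp p' hp']
        exact ⟨trivial, hrp, hrp', fun t _ => hmax t⟩
      exact Set.mem_insert_of_mem _ this.1
  ext r
  constructor
  · rintro ⟨hrB, hrp, hrp', hmax⟩
    obtain ⟨s, ⟨-, hsp, hsp', hsmax⟩, hrs⟩ := (hqsl p p').2 r hrp hrp'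
    have hsmax' : ∀ t, t ≤ p → t ≤ p' → s ≤ t → s = t := fun t => hsmax t trivial
    have hsB : s ∈ insert q A := memB s hsp hsp' hsmax'
    have hre := hmax s hsB hsp hsp' hrs
    subst hre
    exact ⟨trivial, hsp, hsp', hsmax⟩
  · rintro ⟨-, hrp, hrp', hmax⟩
    exact ⟨memB r hrp hrp' (fun t => hmax t trivial), hrp, hrp',
      fun t _ => hmax t trivial⟩
end
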